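/- Let n = 2 and m ≥ 1, and let v_1, v_2 be additive valuations over M = {1,…,m}. Allocate the items by cycling through the picking sequence p_1 p_2 p_2 until all items are taken, where at each turn the current player takes a remaining item of maximum value to her. Then the resulting allocation (T_1, T_2) satisfies v_i(T_i) ≥ (2/3)·μ_i(2, M) for i = 1, 2. Consequently, the induced mechanism (with players picking according to their publicly known rankings) is a truthful 2/3-approximation mechanism for the public rankings model. -/
import Mathlib


open Finset

/-- The total value of a bundle `S` of items under the additive valuation given by `v`. -/
noncomputable def bundleVal {m : ℕ} (v : Fin m → ℝ) (S : Finset (Fin m)) : ℝ :=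
  ∑ j ∈ S, v j

/-- The bundle of items received by player `i` under the allocation `alloc`,
where `alloc j` is the player that receives item `j`.  (Such functions are exactly the
partitions of the items into `n` possibly empty bundles.) -/
def bundleOf {n m : ℕ} (alloc : Fin m → Fin n) (i : Fin n) : Finset (Fin m) :=
  Finset.univ.filter fun j => alloc j = i

/-- The `n`-maximin share of a player with additive valuation `v` over the item set `Fin m`:
the maximum over all partitions of the items into `n` bundles of the minimum bundle value. -/
noncomputable def mms {m : ℕ} (n : ℕ) (v : Fin m → ℝ) : ℝ :=
  ⨆ f : Fin m → Fin n, ⨅ i : Fin n, bundleVal v (bundleOf f i)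

/-- Truthfulness of a mechanism in the cardinal model. -/
def CardTruthful {n m : ℕ} (A : (Fin n → Fin m → ℝ) → (Fin m → Fin n)) : Prop :=
  ∀ V : Fin n → Fin m → ℝ, (∀ i j, 0 ≤ V i j) →
    ∀ (i : Fin n) (v' : Fin m → ℝ), (∀ j, 0 ≤ v' j) →
      bundleVal (V i) (bundleOf (A (Function.update V i v')) i) ≤
        bundleVal (V i) (bundleOf (A V) i)

/-- `ρ`-approximation of a mechanism in the cardinal model. -/
def CardApprox {n m : ℕ} (ρ : ℝ) (A : (Fin n → Fin m → ℝ) → (Fin m → Fin n)) : Prop :=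
  ∀ V : Fin n → Fin m → ℝ, (∀ i j, 0 ≤ V i j) →
    ∀ i : Fin n, ρ * mms n (V i) ≤ bundleVal (V i) (bundleOf (A V) i)

/-- A ranking (strict total order on the items) is encoded as a permutation
`σ : Fin m ≃ Fin m` sending positions to items, `σ 0` being the top item.
A valuation `v` is consistent with the ranking `σ` if the values are
non-increasing along the positions of the ranking. -/
def Consistent {m : ℕ} (v : Fin m → ℝ) (σ : Equiv.Perm (Fin m)) : Prop :=
  ∀ k l : Fin m, k ≤ l → v (σ l) ≤ v (σ k)

/-- Truthfulness of a mechanism in the ordinal model. -/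
def OrdTruthful {n m : ℕ} (A : (Fin n → Equiv.Perm (Fin m)) → (Fin m → Fin n)) : Prop :=
  ∀ (R : Fin n → Equiv.Perm (Fin m)) (i : Fin n) (v : Fin m → ℝ),
    (∀ j, 0 ≤ v j) → Consistent v (R i) →
      ∀ σ' : Equiv.Perm (Fin m),
        bundleVal v (bundleOf (A (Function.update R i σ')) i) ≤
          bundleVal v (bundleOf (A R) i)

/-- `ρ`-approximation of a mechanism in the ordinal model. -/
def OrdApprox {n m : ℕ} (ρ : ℝ) (A : (Fin n → Equiv.Perm (Fin m)) → (Fin m → Fin n)) : Prop :=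
  ∀ V : Fin n → Fin m → ℝ, (∀ i j, 0 ≤ V i j) →
    ∀ R : Fin n → Equiv.Perm (Fin m), (∀ i, Consistent (V i) (R i)) →
      ∀ i : Fin n, ρ * mms n (V i) ≤ bundleVal (V i) (bundleOf (A R) i)

/-- Truthfulness of a mechanism in the public rankings model with publicly known rankings `R`. -/
def PRTruthful {n m : ℕ} (R : Fin n → Equiv.Perm (Fin m))
    (A : (Fin n → Fin m → ℝ) → (Fin m → Fin n)) : Prop :=
  ∀ V : Fin n → Fin m → ℝ, (∀ i j, 0 ≤ V i j) → (∀ i, Consistent (V i) (R i)) →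
    ∀ (i : Fin n) (v' : Fin m → ℝ), (∀ j, 0 ≤ v' j) → Consistent v' (R i) →
      bundleVal (V i) (bundleOf (A (Function.update V i v')) i) ≤
        bundleVal (V i) (bundleOf (A V) i)

/-- `ρ`-approximation in the public rankings model with publicly known rankings `R`. -/
def PRApprox {n m : ℕ} (ρ : ℝ) (R : Fin n → Equiv.Perm (Fin m))
    (A : (Fin n → Fin m → ℝ) → (Fin m → Fin n)) : Prop :=
  ∀ V : Fin n → Fin m → ℝ, (∀ i j, 0 ≤ V i j) → (∀ i, Consistent (V i) (R i)) →
    ∀ i : Fin n, ρ * mms n (V i) ≤ bundleVal (V i) (bundleOf (A V) i)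

/-- The highest-ranked item of the nonempty set `S` according to the ranking `σ`. -/
def bestItem {m : ℕ} (σ : Equiv.Perm (Fin m)) (S : Finset (Fin m)) (h : S.Nonempty) : Fin m :=
  σ ((S.image σ.symm).min' (h.image σ.symm))

/-- The (possibly partial) allocation produced by running the picking sequence `seq` on the
remaining items `S`: at each turn the current player of the sequence takes the highest-ranked
remaining item according to her ranking. -/
def pickAllocList {n m : ℕ} (R : Fin n → Equiv.Perm (Fin m)) :
    List (Fin n) → Finset (Fin m) → Fin m → Option (Fin n)
  | [], _ => fun _ => none
  | p :: rest, S =>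
    if h : S.Nonempty then
      Function.update (pickAllocList R rest (S.erase (bestItem (R p) S h)))
        (bestItem (R p) S h) (some p)
    else fun _ => none

/-- The mechanism for the ordinal model induced by the picking sequence `seq`. -/
def pickMech {n m : ℕ} (seq : List (Fin n)) (R : Fin n → Equiv.Perm (Fin m)) :
    Fin m → Option (Fin n) :=
  pickAllocList R seq Finset.univ

/-- The bundle of player `i` in a possibly partial allocation. -/
def obundleOf {n m : ℕ} (alloc : Fin m → Option (Fin n)) (i : Fin n) : Finset (Fin m) :=
  Finset.univ.filter fun j => alloc j = some i

/-- Truthfulness in the ordinal model, for mechanisms producing possibly partial allocations. -/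
def OrdTruthfulO {n m : ℕ} (A : (Fin n → Equiv.Perm (Fin m)) → (Fin m → Option (Fin n))) : Prop :=
  ∀ (R : Fin n → Equiv.Perm (Fin m)) (i : Fin n) (v : Fin m → ℝ),
    (∀ j, 0 ≤ v j) → Consistent v (R i) →
      ∀ σ' : Equiv.Perm (Fin m),
        bundleVal v (obundleOf (A (Function.update R i σ')) i) ≤
          bundleVal v (obundleOf (A R) i)

/-- `ρ`-approximation in the ordinal model, for mechanisms producing possibly partial
allocations. -/
def OrdApproxO {n m : ℕ} (ρ : ℝ)
    (A : (Fin n → Equiv.Perm (Fin m)) → (Fin m → Option (Fin n))) : Prop :=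
  ∀ V : Fin n → Fin m → ℝ, (∀ i j, 0 ≤ V i j) →
    ∀ R : Fin n → Equiv.Perm (Fin m), (∀ i, Consistent (V i) (R i)) →
      ∀ i : Fin n, ρ * mms n (V i) ≤ bundleVal (V i) (obundleOf (A R) i)

/-- Truthfulness in the public rankings model, for mechanisms producing possibly partial
allocations. -/
def PRTruthfulO {n m : ℕ} (R : Fin n → Equiv.Perm (Fin m))
    (A : (Fin n → Fin m → ℝ) → (Fin m → Option (Fin n))) : Prop :=
  ∀ V : Fin n → Fin m → ℝ, (∀ i j, 0 ≤ V i j) → (∀ i, Consistent (V i) (R i)) →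
    ∀ (i : Fin n) (v' : Fin m → ℝ), (∀ j, 0 ≤ v' j) → Consistent v' (R i) →
      bundleVal (V i) (obundleOf (A (Function.update V i v')) i) ≤
        bundleVal (V i) (obundleOf (A V) i)

/-- `ρ`-approximation in the public rankings model, for mechanisms producing possibly partial
allocations. -/
def PRApproxO {n m : ℕ} (ρ : ℝ) (R : Fin n → Equiv.Perm (Fin m))
    (A : (Fin n → Fin m → ℝ) → (Fin m → Option (Fin n))) : Prop :=
  ∀ V : Fin n → Fin m → ℝ, (∀ i j, 0 ≤ V i j) → (∀ i, Consistent (V i) (R i)) →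
    ∀ i : Fin n, ρ * mms n (V i) ≤ bundleVal (V i) (obundleOf (A V) i)

/-- The picking sequence obtained by cycling `p₁ p₂ p₂` until all `m` items are taken. -/
def seq122 (m : ℕ) : List (Fin 2) :=
  (List.range m).map fun t => if t % 3 = 0 then 0 else 1


lemma bestItem_mem {m : ℕ} (σ : Equiv.Perm (Fin m)) (S : Finset (Fin m)) (h : S.Nonempty) :
    bestItem σ S h ∈ S := by
  have h2 := (S.image σ.symm).min'_mem (h.image σ.symm)
  rw [Finset.mem_image] at h2
  obtain ⟨a, ha, hae⟩ := h2
  unfold bestItem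
  rw [← hae, Equiv.apply_symm_apply]
  exact ha

lemma le_bestItem {m : ℕ} {v : Fin m → ℝ} {σ : Equiv.Perm (Fin m)} (hc : Consistent v σ)
    {S : Finset (Fin m)} (h : S.Nonempty) {j : Fin m} (hj : j ∈ S) :
    v j ≤ v (bestItem σ S h) := by
  have hmin : (S.image σ.symm).min' (h.image σ.symm) ≤ σ.symm j :=
    Finset.min'_le _ _ (Finset.mem_image_of_mem _ hj)
  have h2 := hc _ _ hmin
  simpa [bestItem] using h2

lemma pickAllocList_eq_some {n m : ℕ} (R : Fin n → Equiv.Perm (Fin m)) :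
    ∀ (L : List (Fin n)) (S : Finset (Fin m)) (j : Fin m) (i : Fin n),
      pickAllocList R L S j = some i → j ∈ S := by
  intro L
  induction L with
  | nil => intro S j i h; simp [pickAllocList] at h
  | cons p rest ih =>
    intro S j i h
    rw [pickAllocList] at h
    split at h
    · rename_i hS
      by_cases hj : j = bestItem (R p) S hS
      · rw [hj]; exact bestItem_mem _ _ _
      · rw [Function.update_of_ne hj] at h
        exact Finset.mem_of_mem_erase (ih _ j i h)
    · simp at h

lemma pick_cons_val {n m : ℕ} (R : Fin n → Equiv.Perm (Fin m)) (v : Fin m → ℝ)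
    (p : Fin n) (rest : List (Fin n)) (S : Finset (Fin m)) (hS : S.Nonempty) (i : Fin n) :
    bundleVal v (obundleOf (pickAllocList R (p :: rest) S) i) =
      (if p = i then v (bestItem (R p) S hS) else 0) +
        bundleVal v (obundleOf (pickAllocList R rest (S.erase (bestItem (R p) S hS))) i) := by
  set b := bestItem (R p) S hS with hb
  set g := pickAllocList R rest (S.erase b) with hg
  have h1 : pickAllocList R (p :: rest) S = Function.update g b (some p) := by
    rw [pickAllocList, dif_pos hS]
  have hbnot : b ∉ obundleOf g i := by
    simp only [obundleOf, Finset.mem_filter]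
    rintro ⟨-, h⟩
    exact absurd (pickAllocList_eq_some R rest _ b i h) (Finset.notMem_erase b S)
  rw [h1]
  by_cases hpi : p = i
  · subst hpi
    have h2 : obundleOf (Function.update g b (some p)) p = insert b (obundleOf g p) := by
      ext j
      simp only [obundleOf, Finset.mem_filter, Finset.mem_univ, true_and, Finset.mem_insert]
      by_cases hj : j = b
      · subst hj; simp
      · rw [Function.update_of_ne hj]; simp [hj]
    rw [h2, if_pos rfl]
    unfold bundleVal
    rw [Finset.sum_insert hbnot]
  · have h2 : obundleOf (Function.update g b (some p)) i = obundleOf g i := by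
      ext j
      simp only [obundleOf, Finset.mem_filter, Finset.mem_univ, true_and]
      by_cases hj : j = b
      · subst hj
        rw [Function.update_self]
        simp only [Option.some_inj]
        constructor
        · intro h; exact absurd h hpi
        · intro h
          exact absurd (pickAllocList_eq_some R rest _ b i h) (Finset.notMem_erase b S)
      · rw [Function.update_of_ne hj]
    rw [h2, if_neg hpi, zero_add]

lemma seq122_add3 (c : ℕ) : seq122 (c + 3) = 0 :: 1 :: 1 :: seq122 c := by
  unfold seq122
  rw [show c + 3 = 3 + c from by omega, List.range_add, List.map_append, List.map_map]
  have h1 : ((fun t => if t % 3 = 0 then (0 : Fin 2) else 1) ∘ (fun i => 3 + i)) =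
      fun t => if t % 3 = 0 then (0 : Fin 2) else 1 := by
    funext t
    simp [Nat.add_mod_left]
  rw [h1]
  rfl

lemma bundleVal_nonneg {m : ℕ} {v : Fin m → ℝ} (hv : ∀ j, 0 ≤ v j) (S : Finset (Fin m)) :
    0 ≤ bundleVal v S :=
  Finset.sum_nonneg fun j _ => hv j

lemma bundleVal_erase {m : ℕ} (v : Fin m → ℝ) {S : Finset (Fin m)} {b : Fin m} (hb : b ∈ S) :
    bundleVal v (S.erase b) = bundleVal v S - v b :=
  Finset.sum_erase_eq_sub hb

lemma player0_bound {m : ℕ} (R : Fin 2 → Equiv.Perm (Fin m)) (v : Fin m → ℝ)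
    (hv : ∀ j, 0 ≤ v j) (hc : Consistent v (R 0)) :
    ∀ c S, S.card = c →
      bundleVal v S ≤ 3 * bundleVal v (obundleOf (pickAllocList R (seq122 c) S) 0) := by
  intro c
  induction c using Nat.strong_induction_on with
  | _ c ih =>
    intro S hcard
    match c, ih with
    | 0, _ =>
      have hS : S = ∅ := Finset.card_eq_zero.mp hcard
      subst hS
      simp [bundleVal, obundleOf, pickAllocList, seq122]
    | 1, _ =>
      have hS : S.Nonempty := by rw [← Finset.card_pos, hcard]; omega
      have hseq : seq122 1 = [0] := rfl
      rw [hseq, pick_cons_val R v 0 [] S hS 0, if_pos rfl]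
      set b := bestItem (R 0) S hS with hb
      have hrest : bundleVal v (obundleOf (pickAllocList R [] (S.erase b)) 0) = 0 := by
        simp [bundleVal, obundleOf, pickAllocList]
      rw [hrest]
      have hsum : bundleVal v S ≤ S.card • v b :=
        Finset.sum_le_card_nsmul S v (v b) fun j hj => le_bestItem hc hS hj
      rw [hcard] at hsum
      simp only [one_smul] at hsum
      have := hv b
      linarith
    | 2, _ =>
      have hS : S.Nonempty := by rw [← Finset.card_pos, hcard]; omega
      have hseq : seq122 2 = [0, 1] := rfl
      rw [hseq, pick_cons_val R v 0 [1] S hS 0, if_pos rfl]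
      set b := bestItem (R 0) S hS with hb
      have hS1 : (S.erase b).Nonempty := by
        rw [← Finset.card_pos, Finset.card_erase_of_mem (bestItem_mem _ _ _), hcard]; omega
      rw [pick_cons_val R v 1 [] (S.erase b) hS1 0]
      have h10 : ((1 : Fin 2) = 0) = False := by simp
      rw [if_neg (by simp)]
      have hrest : bundleVal v (obundleOf (pickAllocList R []
          ((S.erase b).erase (bestItem (R 1) (S.erase b) hS1))) 0) = 0 := by
        simp [bundleVal, obundleOf, pickAllocList]
      rw [hrest]
      have hsum : bundleVal v S ≤ S.card • v b :=
        Finset.sum_le_card_nsmul S v (v b) fun j hj => le_bestItem hc hS hj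
      rw [hcard] at hsum
      have h2 : (2 : ℕ) • v b = 2 * v b := by
        rw [nsmul_eq_mul]; norm_num
      rw [h2] at hsum
      have := hv b
      linarith
    | (k + 3), ih =>
      have hS : S.Nonempty := by rw [← Finset.card_pos, hcard]; omega
      rw [seq122_add3, pick_cons_val R v 0 _ S hS 0, if_pos rfl]
      set b := bestItem (R 0) S hS with hb
      have hbmem : b ∈ S := bestItem_mem _ _ _
      set S1 := S.erase b with hS1def
      have hS1card : S1.card = k + 2 := by
        rw [hS1def, Finset.card_erase_of_mem hbmem, hcard]; omega
      have hS1 : S1.Nonempty := by rw [← Finset.card_pos, hS1card]; omega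
      rw [pick_cons_val R v 1 _ S1 hS1 0, if_neg (by simp)]
      set c1 := bestItem (R 1) S1 hS1 with hc1
      have hc1mem : c1 ∈ S1 := bestItem_mem _ _ _
      set S2 := S1.erase c1 with hS2def
      have hS2card : S2.card = k + 1 := by
        rw [hS2def, Finset.card_erase_of_mem hc1mem, hS1card]; omega
      have hS2 : S2.Nonempty := by rw [← Finset.card_pos, hS2card]; omega
      rw [pick_cons_val R v 1 _ S2 hS2 0, if_neg (by simp)]
      set d := bestItem (R 1) S2 hS2 with hd
      have hdmem : d ∈ S2 := bestItem_mem _ _ _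
      set S3 := S2.erase d with hS3def
      have hS3card : S3.card = k := by
        rw [hS3def, Finset.card_erase_of_mem hdmem, hS2card]; omega
      have hrec := ih k (by omega) S3 hS3card
      have e1 : bundleVal v S1 = bundleVal v S - v b := bundleVal_erase v hbmem
      have e2 : bundleVal v S2 = bundleVal v S1 - v c1 := bundleVal_erase v hc1mem
      have e3 : bundleVal v S3 = bundleVal v S2 - v d := bundleVal_erase v hdmem
      have hcb : v c1 ≤ v b := le_bestItem hc hS (Finset.mem_of_mem_erase hc1mem)
      have hdb : v d ≤ v b := le_bestItem hc hS
        (Finset.mem_of_mem_erase (Finset.mem_of_mem_erase hdmem))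
      linarith

lemma player1_bound {m : ℕ} (R : Fin 2 → Equiv.Perm (Fin m)) (v : Fin m → ℝ)
    (hv : ∀ j, 0 ≤ v j) (hc : Consistent v (R 1)) :
    ∀ c S, S.card = c →
      2 * (bundleVal v S - (if h : S.Nonempty then v (bestItem (R 0) S h) else 0)) ≤
        3 * bundleVal v (obundleOf (pickAllocList R (seq122 c) S) 1) := by
  intro c
  induction c using Nat.strong_induction_on with
  | _ c ih =>
    intro S hcard
    match c, ih with
    | 0, _ =>
      have hS : S = ∅ := Finset.card_eq_zero.mp hcard
      subst hS
      simp [bundleVal, obundleOf, pickAllocList, seq122]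
    | 1, _ =>
      have hS : S.Nonempty := by rw [← Finset.card_pos, hcard]; omega
      have hseq : seq122 1 = [0] := rfl
      rw [hseq, pick_cons_val R v 0 [] S hS 1, if_neg (by simp), dif_pos hS]
      set b := bestItem (R 0) S hS with hb
      have hbmem : b ∈ S := bestItem_mem _ _ _
      have hS1 : S.erase b = ∅ := by
        rw [← Finset.card_eq_zero, Finset.card_erase_of_mem hbmem, hcard]
      have e1 : bundleVal v (S.erase b) = bundleVal v S - v b := bundleVal_erase v hbmem
      rw [hS1] at e1
      have e0 : bundleVal v (∅ : Finset (Fin m)) = 0 := by simp [bundleVal]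
      have hrest : bundleVal v (obundleOf (pickAllocList R [] (S.erase b)) 1) = 0 := by
        simp [bundleVal, obundleOf, pickAllocList]
      rw [hrest]
      rw [e0] at e1
      linarith
    | 2, _ =>
      have hS : S.Nonempty := by rw [← Finset.card_pos, hcard]; omega
      have hseq : seq122 2 = [0, 1] := rfl
      rw [hseq, pick_cons_val R v 0 [1] S hS 1, if_neg (by simp), dif_pos hS]
      set b := bestItem (R 0) S hS with hb
      have hbmem : b ∈ S := bestItem_mem _ _ _
      have hS1 : (S.erase b).Nonempty := by
        rw [← Finset.card_pos, Finset.card_erase_of_mem hbmem, hcard]; omega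
      rw [pick_cons_val R v 1 [] (S.erase b) hS1 1, if_pos rfl]
      set c1 := bestItem (R 1) (S.erase b) hS1 with hc1
      have hc1mem : c1 ∈ S.erase b := bestItem_mem _ _ _
      have hS2 : (S.erase b).erase c1 = ∅ := by
        rw [← Finset.card_eq_zero, Finset.card_erase_of_mem hc1mem,
          Finset.card_erase_of_mem hbmem, hcard]
      have e1 : bundleVal v (S.erase b) = bundleVal v S - v b := bundleVal_erase v hbmem
      have e2 : bundleVal v ((S.erase b).erase c1) = bundleVal v (S.erase b) - v c1 :=
        bundleVal_erase v hc1mem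
      rw [hS2] at e2
      have e0 : bundleVal v (∅ : Finset (Fin m)) = 0 := by simp [bundleVal]
      rw [e0] at e2
      have hrest : bundleVal v (obundleOf (pickAllocList R [] ((S.erase b).erase c1)) 1) = 0 := by
        simp [bundleVal, obundleOf, pickAllocList]
      rw [hrest]
      have := hv c1
      linarith
    | (k + 3), ih =>
      have hS : S.Nonempty := by rw [← Finset.card_pos, hcard]; omega
      rw [seq122_add3, pick_cons_val R v 0 _ S hS 1, if_neg (by simp), dif_pos hS]
      set b := bestItem (R 0) S hS with hb
      have hbmem : b ∈ S := bestItem_mem _ _ _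
      set S1 := S.erase b with hS1def
      have hS1card : S1.card = k + 2 := by
        rw [hS1def, Finset.card_erase_of_mem hbmem, hcard]; omega
      have hS1 : S1.Nonempty := by rw [← Finset.card_pos, hS1card]; omega
      rw [pick_cons_val R v 1 _ S1 hS1 1, if_pos rfl]
      set c1 := bestItem (R 1) S1 hS1 with hc1
      have hc1mem : c1 ∈ S1 := bestItem_mem _ _ _
      set S2 := S1.erase c1 with hS2def
      have hS2card : S2.card = k + 1 := by
        rw [hS2def, Finset.card_erase_of_mem hc1mem, hS1card]; omega
      have hS2 : S2.Nonempty := by rw [← Finset.card_pos, hS2card]; omega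
      rw [pick_cons_val R v 1 _ S2 hS2 1, if_pos rfl]
      set d := bestItem (R 1) S2 hS2 with hd
      have hdmem : d ∈ S2 := bestItem_mem _ _ _
      set S3 := S2.erase d with hS3def
      have hS3card : S3.card = k := by
        rw [hS3def, Finset.card_erase_of_mem hdmem, hS2card]; omega
      have hrec := ih k (by omega) S3 hS3card
      have e1 : bundleVal v S1 = bundleVal v S - v b := bundleVal_erase v hbmem
      have e2 : bundleVal v S2 = bundleVal v S1 - v c1 := bundleVal_erase v hc1mem
      have e3 : bundleVal v S3 = bundleVal v S2 - v d := bundleVal_erase v hdmem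
      have hdc1 : v d ≤ v c1 := le_bestItem hc hS1 (Finset.mem_of_mem_erase hdmem)
      have hB0 : (if h : S3.Nonempty then v (bestItem (R 0) S3 h) else 0) ≤ v d := by
        by_cases h3 : S3.Nonempty
        · rw [dif_pos h3]
          exact le_bestItem hc hS2
            (Finset.mem_of_mem_erase (bestItem_mem (R 0) S3 h3))
        · rw [dif_neg h3]; exact hv d
      linarith

lemma bundle_partition {m : ℕ} (v : Fin m → ℝ) (f : Fin m → Fin 2) :
    bundleVal v (bundleOf f 0) + bundleVal v (bundleOf f 1) = bundleVal v Finset.univ := by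
  unfold bundleVal bundleOf
  rw [← Finset.sum_filter_add_sum_filter_not Finset.univ (fun j => f j = 0) v]
  congr 1
  apply Finset.sum_congr _ (fun _ _ => rfl)
  ext j
  simp only [Finset.mem_filter, Finset.mem_univ, true_and, Fin.ext_iff, Fin.val_one, Fin.val_zero]
  have := (f j).isLt
  omega

lemma mms_le_bound {m : ℕ} (v : Fin m → ℝ) (B : ℝ)
    (hB : ∀ f : Fin m → Fin 2, ∃ i, bundleVal v (bundleOf f i) ≤ B) :
    mms 2 v ≤ B := by
  apply ciSup_le
  intro f
  obtain ⟨i, hi⟩ := hB f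
  exact le_trans (ciInf_le (Finite.bddBelow_range _) i) hi

lemma mms_le_half {m : ℕ} (v : Fin m → ℝ) :
    2 * mms 2 v ≤ bundleVal v Finset.univ := by
  have h : mms 2 v ≤ bundleVal v Finset.univ / 2 := by
    apply mms_le_bound
    intro f
    have h := bundle_partition v f
    rcases le_total (bundleVal v (bundleOf f 0)) (bundleVal v (bundleOf f 1)) with h01 | h01
    · exact ⟨0, by linarith⟩
    · exact ⟨1, by linarith⟩
  linarith

lemma mms_le_sub {m : ℕ} (v : Fin m → ℝ) (hv : ∀ j, 0 ≤ v j) (b : Fin m) :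
    mms 2 v ≤ bundleVal v Finset.univ - v b := by
  apply mms_le_bound
  intro f
  refine ⟨if f b = 0 then 1 else 0, ?_⟩
  have hne : f b ≠ (if f b = 0 then (1 : Fin 2) else 0) := by
    split_ifs with h
    · rw [h]; decide
    · exact h
  have hsub : bundleOf f (if f b = 0 then (1 : Fin 2) else 0) ⊆ Finset.univ.erase b := by
    intro j hj
    simp only [bundleOf, Finset.mem_filter, Finset.mem_univ, true_and] at hj
    rw [Finset.mem_erase]
    refine ⟨?_, Finset.mem_univ j⟩
    intro hjb
    rw [hjb] at hj
    exact hne hj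
  calc bundleVal v (bundleOf f (if f b = 0 then (1 : Fin 2) else 0))
      ≤ bundleVal v (Finset.univ.erase b) :=
        Finset.sum_le_sum_of_subset_of_nonneg hsub (fun j _ _ => hv j)
    _ = bundleVal v Finset.univ - v b := bundleVal_erase v (Finset.mem_univ b)

/-- For `n = 2` players and `m ≥ 1` items: allocating the items by cycling
through the picking sequence `p₁ p₂ p₂`, with each player taking at her turn a remaining item of
maximum value to her (equivalently, the top remaining item of any ranking consistent with her
valuation), gives every player at least `2/3` of her maximin share.  Consequently, the induced
mechanism (players picking according to their publicly known rankings) is a truthful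
`2/3`-approximation mechanism for the public rankings model. -/
theorem stmt15 (m : ℕ) (hm : 1 ≤ m) :
    (∀ V : Fin 2 → Fin m → ℝ, (∀ i j, 0 ≤ V i j) →
      ∀ R : Fin 2 → Equiv.Perm (Fin m), (∀ i, Consistent (V i) (R i)) →
        ∀ i : Fin 2, (2 / 3 : ℝ) * mms 2 (V i) ≤
          bundleVal (V i) (obundleOf (pickMech (seq122 m) R) i)) ∧
    (∀ R : Fin 2 → Equiv.Perm (Fin m),
      PRTruthfulO R (fun _ => pickMech (seq122 m) R) ∧
      PRApproxO (2 / 3) R (fun _ => pickMech (seq122 m) R)) := by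
  have main : ∀ V : Fin 2 → Fin m → ℝ, (∀ i j, 0 ≤ V i j) →
      ∀ R : Fin 2 → Equiv.Perm (Fin m), (∀ i, Consistent (V i) (R i)) →
        ∀ i : Fin 2, (2 / 3 : ℝ) * mms 2 (V i) ≤
          bundleVal (V i) (obundleOf (pickMech (seq122 m) R) i) := by
    intro V hV R hcons i
    have hcard : (Finset.univ : Finset (Fin m)).card = m := by simp
    have huniv : (Finset.univ : Finset (Fin m)).Nonempty := by
      rw [← Finset.card_pos, hcard]; omega
    unfold pickMech
    fin_cases i
    · show (2 / 3 : ℝ) * mms 2 (V 0) ≤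
        bundleVal (V 0) (obundleOf (pickAllocList R (seq122 m) Finset.univ) 0)
      have h0 := player0_bound R (V 0) (hV 0) (hcons 0) m Finset.univ hcard
      have hm2 := mms_le_half (V 0)
      linarith
    · show (2 / 3 : ℝ) * mms 2 (V 1) ≤
        bundleVal (V 1) (obundleOf (pickAllocList R (seq122 m) Finset.univ) 1)
      have h1 := player1_bound R (V 1) (hV 1) (hcons 1) m Finset.univ hcard
      rw [dif_pos huniv] at h1
      have hm2 := mms_le_sub (V 1) (hV 1) (bestItem (R 0) Finset.univ huniv)
      linarith
  refine ⟨main, fun R => ⟨?_, ?_⟩⟩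
  · intro V hV hcons i v' hv' hc'
    exact le_refl _
  · intro V hV hcons i
    exact main V hV R hcons i
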